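/- arXiv:1408.3370 — 2 statements merged into one kernel-verified Lean document; each statement's English description precedes it below -/
import Mathlib

section
/- Let J ⊆ Δ and u ∈ W. If w_J w_Δ <_∅ u w_Δ in the weak left order on W, then u ∈ W_J. -/
/-! Common framework: a reduced (crystallographic) root system `Φ` in a real vector
space `V`, with Weyl group `W` (generated by the reflections `s_α`, `α ∈ Φ`, inside the
group of linear automorphisms of `V`), a base `Δ` of simple roots with positive system
`Pos = Φ⁺`, and the associated combinatorics. -/

open scoped Classical Pointwise

namespace PaperSp

variable {V : Type} [AddCommGroup V] [Module ℝ V]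

/-- The data of a reduced crystallographic root system in `V`:  a finite spanning set
`Phi` of nonzero vectors together with, for each root `α`, a linear functional
`pairing α = ⟨·, α∨⟩` taking the value `2` at `α`, such that the associated reflections
`s_α : β ↦ β − ⟨β, α∨⟩α` preserve `Phi`, all pairings are integral, and the only
multiples of a root `α` which are roots are `±α`. -/
structure RootSystemData (V : Type) [AddCommGroup V] [Module ℝ V] : Type where
  Phi : Set V
  pairing : V → V →ₗ[ℝ] ℝ
  pairing_self : ∀ α, α ∈ Phi → pairing α α = 2
  finite : Phi.Finite
  span_top : Submodule.span ℝ Phi = ⊤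
  zero_not_mem : (0 : V) ∉ Phi
  crystallographic : ∀ α ∈ Phi, ∀ β ∈ Phi, ∃ n : ℤ, pairing α β = (n : ℝ)
  reduced : ∀ α ∈ Phi, ∀ t : ℝ, t • α ∈ Phi → t = 1 ∨ t = -1
  reflect_mem : ∀ α ∈ Phi, ∀ β ∈ Phi, β - pairing α β • α ∈ Phi

/-- The reflection `s_α` associated to a root `α` (the identity if `α ∉ Φ`). -/
noncomputable def RootSystemData.refl (R : RootSystemData V) (α : V) : V ≃ₗ[ℝ] V :=
  if h : α ∈ R.Phi then Module.reflection (R.pairing_self α h) else 1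

/-- The set of reflections `{s_α : α ∈ K}` associated to a set `K` of roots. -/
noncomputable def refls (R : RootSystemData V) (K : Set V) : Set (V ≃ₗ[ℝ] V) :=
  {s | ∃ α ∈ K, s = R.refl α}

/-- The Weyl group `W`, generated by all reflections `s_α`, `α ∈ Φ`. -/
noncomputable def weylGroup (R : RootSystemData V) : Subgroup (V ≃ₗ[ℝ] V) :=
  Subgroup.closure (refls R R.Phi)

/-- The subgroup `W_J` generated by the reflections `s_α`, `α ∈ J`. -/
noncomputable def WsubJ (R : RootSystemData V) (J : Set V) : Subgroup (V ≃ₗ[ℝ] V) :=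
  Subgroup.closure (refls R J)

/-- The word length of `w` with respect to a generating set `S` of a group. -/
noncomputable def lengthWrt {G : Type*} [Group G] (S : Set G) (w : G) : ℕ :=
  sInf {n | ∃ ls : List G, ls.length = n ∧ (∀ x ∈ ls, x ∈ S) ∧ ls.prod = w}

/-- The length function `ℓ` on `W` with respect to the simple reflections
`S = {s_α : α ∈ Δ}`. -/
noncomputable def len (R : RootSystemData V) (Δ : Set V) (w : V ≃ₗ[ℝ] V) : ℕ :=
  lengthWrt (refls R Δ) w

/-- `Pos` and `Δ` form a positive system with base `Δ` for the root system `R`: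
`Φ = Pos ⊔ (−Pos)`, `Δ ⊆ Pos` is linearly independent, and every positive root is a
nonnegative integral combination of simple roots. -/
structure IsBase (R : RootSystemData V) (Pos Δ : Set V) : Prop where
  pos_sub : Pos ⊆ R.Phi
  mem_or_neg : ∀ α ∈ R.Phi, α ∈ Pos ∨ -α ∈ Pos
  not_both : ∀ α : V, ¬(α ∈ Pos ∧ -α ∈ Pos)
  delta_sub : Δ ⊆ Pos
  indep : LinearIndependent ℝ (fun a : Δ => (a : V))
  decomp : ∀ β ∈ Pos, ∃ c : V →₀ ℕ, (c.support : Set V) ⊆ Δ ∧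
    β = c.sum (fun a m => (m : ℝ) • a)

/-- The set `W^J = {w ∈ W : w(α) ∈ Φ⁺ for all α ∈ J}` of minimal length representatives
of `W/W_J`. -/
noncomputable def WupJ (R : RootSystemData V) (Pos : Set V) (J : Set V) :
    Set (V ≃ₗ[ℝ] V) :=
  {w | w ∈ weylGroup R ∧ ∀ α ∈ J, w α ∈ Pos}

/-- The set `V^J = W^J \ ⋃_{α ∈ Δ\J} W^{J∪{α}}`. -/
noncomputable def VupJ (R : RootSystemData V) (Pos Δ : Set V) (J : Set V) :
    Set (V ≃ₗ[ℝ] V) :=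
  {w | w ∈ WupJ R Pos J ∧ ∀ α ∈ Δ, α ∉ J → w ∉ WupJ R Pos (J ∪ {α})}

/-- `Φ_J(1) = Φ⁻ \ (Φ⁻ ∩ W_J·J)`. -/
noncomputable def PhiJone (R : RootSystemData V) (Pos : Set V) (J : Set V) : Set V :=
  (R.Phi \ Pos) \ {β | ∃ v ∈ WsubJ R J, ∃ α ∈ J, β = v α}

/-- `Φ_J(w) = w · Φ_J(1)`. -/
noncomputable def PhiJ (R : RootSystemData V) (Pos : Set V) (J : Set V)
    (w : V ≃ₗ[ℝ] V) : Set V :=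
  (fun x => w x) '' (PhiJone R Pos J)

/-- `hProjJ R Pos J pJ` says that `pJ` is the projection `w ↦ (w)^J` sending an element
of `W` to the unique element of `W^J` in the coset `w W_J`. -/
noncomputable def IsProjJ (R : RootSystemData V) (Pos : Set V) (J : Set V)
    (pJ : (V ≃ₗ[ℝ] V) → (V ≃ₗ[ℝ] V)) : Prop :=
  ∀ w ∈ weylGroup R, pJ w ∈ WupJ R Pos J ∧ (pJ w)⁻¹ * w ∈ WsubJ R J

/-- The product `s_i ⋯ s_1` of the first `i` members of a sequence in a group. -/
noncomputable def chainProd {G : Type*} [Group G] (s : ℕ → G) (i : ℕ) : G :=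
  (((List.range' 1 i).map s).reverse).prod

/-- The chain `w^(0) = w`, `w^(i) = (s_i ⋯ s_1 w)^J` associated to `w` and a sequence
of simple reflections. -/
noncomputable def chainElt {G : Type*} [Group G] (pJ : G → G) (s : ℕ → G) (w : G)
    (i : ℕ) : G :=
  if i = 0 then w else pJ (chainProd s i * w)

/-- The partial order `<_J`:  `w <_J w'` iff there are simple reflections
`s_1, …, s_r` (`r ≥ 1`) such that, with `w^(i) = (s_i ⋯ s_1 w)^J`, the lengths
`ℓ(w^(i))` are strictly increasing and `w^(r) = w'`.  Taking `pJ = id`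
(and `J = ∅`) gives the weak left order `<_∅`. -/
noncomputable def ltJ {G : Type*} [Group G] (S : Set G) (ℓ : G → ℕ) (pJ : G → G)
    (w w' : G) : Prop :=
  ∃ r : ℕ, 1 ≤ r ∧ ∃ s : ℕ → G,
    (∀ m, 1 ≤ m → m ≤ r → s m ∈ S) ∧
    (∀ m, 1 ≤ m → m ≤ r → ℓ (chainElt pJ s w (m - 1)) < ℓ (chainElt pJ s w m)) ∧
    chainElt pJ s w r = w'

/-- `w` is the longest element of a subgroup `H` of `W` (with respect to `ℓ`). -/
noncomputable def IsLongestIn (R : RootSystemData V) (Δ : Set V)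
    (H : Subgroup (V ≃ₗ[ℝ] V)) (w : V ≃ₗ[ℝ] V) : Prop :=
  w ∈ H ∧ ∀ v ∈ H, len R Δ v ≤ len R Δ w

end PaperSp

/-! Every step `w ↦ s_α w` of a length-increasing chain has `w⁻¹α > 0`, so it enlarges the
inversion set `N(w) = {β > 0 : wβ < 0}`; hence `N(w_J w_Δ) ⊆ N(u w_Δ)`. As `w_Δ⁻¹` makes all
positive roots negative, right multiplication by `w_Δ` complements inversion sets, giving
`N(u) ⊆ N(w_J)`, and `N(w_J) ⊆ span J` because elements of `W_J` move vectors only within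
`span J`. An element whose inversions lie in `span J` belongs to `W_J`, by peeling simple
reflections off a reduced word. The length comparisons come from the exchange condition, i.e. from
`s_{wβ} = w s_β w⁻¹`. That `w_Δ` is a word in simple reflections follows from its length being at
least that of `u w_Δ`, which is positive. -/

open Set Submodule

namespace LinearIndepOn

variable {V : Type} [AddCommGroup V] [Module ℝ V] {Δ J : Set V} {x y : V}

theorem exists_dual_eq_zero_eq_one (hΔ : LinearIndepOn ℝ id Δ) (hJ : J ⊆ Δ) :
    ∃ f : Module.Dual ℝ V, (∀ a ∈ J, f a = 0) ∧ ∀ a ∈ Δ \ J, f a = 1 := by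
  let b := Module.Basis.extend hΔ
  let g : hΔ.extend (subset_univ Δ) → ℝ := fun i => if (i : V) ∈ J then 0 else 1
  have hb : ∀ a (ha : a ∈ Δ), b.constr ℝ g a = if a ∈ J then 0 else 1 := fun a ha => by
    simpa [b, g, Module.Basis.coe_extend] using
      b.constr_basis ℝ g ⟨a, Module.Basis.subset_extend hΔ ha⟩
  exact ⟨b.constr ℝ g, fun a ha => by simp [hb a (hJ ha), ha],
    fun a ha => by simp [hb a ha.1, ha.2]⟩

theorem mem_span_of_add_mem_span (hΔ : LinearIndepOn ℝ id Δ) (hJ : J ⊆ Δ)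
    (hx : x ∈ AddSubmonoid.closure Δ) (hy : y ∈ AddSubmonoid.closure Δ)
    (hxy : x + y ∈ span ℝ J) : x ∈ span ℝ J := by
  obtain ⟨f, hfJ, hfΔ⟩ := hΔ.exists_dual_eq_zero_eq_one hJ
  have key : ∀ z ∈ AddSubmonoid.closure Δ, 0 ≤ f z ∧ (f z = 0 → z ∈ span ℝ J) := by
    intro z hz
    induction hz using AddSubmonoid.closure_induction with
    | mem a ha =>
      by_cases haJ : a ∈ J
      · exact ⟨(hfJ a haJ).ge, fun _ => subset_span haJ⟩
      · simp [hfΔ a ⟨ha, haJ⟩]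
    | zero => simp
    | add a b _ _ ha hb =>
      rw [map_add]
      exact ⟨add_nonneg ha.1 hb.1, fun h =>
        add_mem (ha.2 (by linarith [ha.1, hb.1])) (hb.2 (by linarith [ha.1, hb.1]))⟩
  have hf : f (x + y) = 0 := (span_le (p := LinearMap.ker f)).2 hfJ hxy
  rw [map_add] at hf
  exact (key x hx).2 (by linarith [(key x hx).1, (key y hy).1])

theorem eq_zero_of_mem_closure_of_neg_mem (hΔ : LinearIndepOn ℝ id Δ)
    (hx : x ∈ AddSubmonoid.closure Δ) (hx' : -x ∈ AddSubmonoid.closure Δ) : x = 0 := by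
  simpa using hΔ.mem_span_of_add_mem_span (empty_subset Δ) hx hx' (by simp)

end LinearIndepOn

namespace PaperSp

section WeakOrder

variable {G : Type*} [Group G] {S : Set G} {ℓ : G → ℕ} {w w' : G}

theorem lengthWrt_prod_le {l : List G} (hl : ∀ x ∈ l, x ∈ S) : lengthWrt S l.prod ≤ l.length :=
  Nat.sInf_le ⟨l, rfl, hl, rfl⟩

theorem exists_list_length_eq_lengthWrt (hw : w ∈ Submonoid.closure S) :
    ∃ l : List G, (∀ x ∈ l, x ∈ S) ∧ l.prod = w ∧ l.length = lengthWrt S w := by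
  obtain ⟨l, hl, rfl⟩ := Submonoid.exists_list_of_mem_closure hw
  obtain ⟨l', hlen, hl', hprod⟩ := Nat.sInf_mem (⟨l.length, l, rfl, hl, rfl⟩ :
    {n | ∃ ls : List G, ls.length = n ∧ (∀ x ∈ ls, x ∈ S) ∧ ls.prod = l.prod}.Nonempty)
  exact ⟨l', hl', hprod, hlen⟩

theorem mem_closure_of_lengthWrt_pos (h : 0 < lengthWrt S w) : w ∈ Submonoid.closure S := by
  obtain ⟨-, l, -, hl, rfl⟩ := Nat.nonempty_of_pos_sInf h
  exact Submonoid.list_prod_mem _ fun x hx => Submonoid.subset_closure (hl x hx)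

def WeakLeftStep (S : Set G) (ℓ : G → ℕ) (x y : G) : Prop :=
  ∃ s ∈ S, y = s * x ∧ ℓ x < ℓ y

theorem chainElt_id_succ (s : ℕ → G) (w : G) (i : ℕ) :
    chainElt id s w (i + 1) = s (i + 1) * chainElt id s w i := by
  have hprod : chainProd s (i + 1) = s (i + 1) * chainProd s i := by
    simp [chainProd, List.range'_concat, add_comm 1 i]
  rcases i with _ | i
  · simp [chainElt, chainProd]
  · simp [chainElt, hprod, mul_assoc]

theorem transGen_of_ltJ_id (h : ltJ S ℓ id w w') :
    Relation.TransGen (WeakLeftStep S ℓ) w w' := by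
  obtain ⟨r, hr, s, hS, hlt, rfl⟩ := h
  have step : ∀ m < r, WeakLeftStep S ℓ (chainElt id s w m) (chainElt id s w (m + 1)) :=
    fun m hm => ⟨s (m + 1), hS _ (by omega) hm, chainElt_id_succ s w m, hlt (m + 1) (by omega) hm⟩
  have chain : ∀ m ≤ r, Relation.ReflTransGen (WeakLeftStep S ℓ) w (chainElt id s w m) := by
    intro m hm
    induction m with
    | zero => exact .refl
    | succ m ih => exact (ih (by omega)).tail (step m (by omega))
  obtain ⟨r, rfl⟩ := Nat.exists_eq_add_one_of_ne_zero (Nat.one_le_iff_ne_zero.1 hr)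
  exact .tail' (chain r (by omega)) (step r (by omega))

theorem lt_of_transGen_weakLeftStep (h : Relation.TransGen (WeakLeftStep S ℓ) w w') :
    ℓ w < ℓ w' := by
  induction h with
  | single h => obtain ⟨_, _, _, hlt⟩ := h; exact hlt
  | tail _ h ih => obtain ⟨_, _, _, hlt⟩ := h; exact ih.trans hlt

end WeakOrder

variable {V : Type} [AddCommGroup V] [Module ℝ V] {R : RootSystemData V} {α β : V}
  {K : Set V} {w w' : V ≃ₗ[ℝ] V}

namespace RootSystemData

theorem refl_of_mem (hα : α ∈ R.Phi) : R.refl α = Module.reflection (R.pairing_self α hα) :=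
  dif_pos hα

theorem refl_apply_of_mem (hα : α ∈ R.Phi) (β : V) :
    R.refl α β = β - R.pairing α β • α := by
  rw [refl_of_mem hα, Module.reflection_apply]

theorem refl_apply_self (hα : α ∈ R.Phi) : R.refl α α = -α := by
  rw [refl_of_mem hα, Module.reflection_apply_self]

theorem refl_inv (α : V) : (R.refl α)⁻¹ = R.refl α := by
  unfold refl
  split_ifs
  exacts [Module.reflection_inv _, inv_one]

theorem refl_mul_self (α : V) : R.refl α * R.refl α = 1 :=
  mul_eq_one_iff_eq_inv.2 (refl_inv α).symm

theorem refl_apply_mem (hα : α ∈ R.Phi) (hβ : β ∈ R.Phi) : R.refl α β ∈ R.Phi := by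
  rw [refl_apply_of_mem hα]
  exact R.reflect_mem α hα β hβ

theorem ne_zero_of_mem (hβ : β ∈ R.Phi) : β ≠ 0 :=
  fun h => R.zero_not_mem (h ▸ hβ)

end RootSystemData

open RootSystemData

theorem WsubJ_mono {J K : Set V} (h : J ⊆ K) : WsubJ R J ≤ WsubJ R K :=
  Subgroup.closure_mono fun _ ⟨α, hα, hs⟩ => ⟨α, h hα, hs⟩

theorem WsubJ_le_weylGroup (hK : K ⊆ R.Phi) : WsubJ R K ≤ weylGroup R :=
  WsubJ_mono hK

theorem mem_WsubJ_iff_mem_submonoidClosure :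
    w ∈ WsubJ R K ↔ w ∈ Submonoid.closure (refls R K) := by
  have hinv : (refls R K)⁻¹ = refls R K := by
    ext s
    simp only [Set.mem_inv, refls, Set.mem_ofPred_eq]
    refine exists_congr fun α => and_congr_right fun _ => ?_
    rw [inv_eq_iff_eq_inv, refl_inv]
  rw [WsubJ, ← Subgroup.mem_toSubmonoid, Subgroup.closure_toSubmonoid, hinv, Set.union_self]

theorem mapsTo_phi_of_mem_weylGroup (hw : w ∈ weylGroup R) : MapsTo w R.Phi R.Phi := by
  induction hw using Subgroup.closure_induction'' with
  | mem s hs =>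
    obtain ⟨α, hα, rfl⟩ := hs
    exact fun β hβ => refl_apply_mem hα hβ
  | inv_mem s hs =>
    obtain ⟨α, hα, rfl⟩ := hs
    rw [refl_inv]
    exact fun β hβ => refl_apply_mem hα hβ
  | one => exact mapsTo_id _
  | mul v w _ _ hv hw => exact hv.comp hw

/-- Both sides are reflections in `wβ` preserving the finite spanning set `Φ`, and such a
reflection is unique. -/
theorem refl_apply_eq_conj (hw : w ∈ weylGroup R) (hβ : β ∈ R.Phi) :
    R.refl (w β) = w * R.refl β * w⁻¹ := by
  have hwβ : w β ∈ R.Phi := mapsTo_phi_of_mem_weylGroup hw hβ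
  have hpairing : R.pairing (w β) = R.pairing β ∘ₗ (w⁻¹ : V ≃ₗ[ℝ] V).toLinearMap := by
    refine Module.Dual.eq_of_preReflection_mapsTo R.finite R.span_top (R.pairing_self _ hwβ)
      (fun γ hγ => ?_) (by simpa using R.pairing_self β hβ) (fun γ hγ => ?_)
    · rw [Module.preReflection_apply, ← refl_apply_of_mem hwβ]
      exact refl_apply_mem hwβ hγ
    · have hmem := mapsTo_phi_of_mem_weylGroup hw
        (refl_apply_mem hβ (mapsTo_phi_of_mem_weylGroup (inv_mem hw) hγ))
      rw [refl_apply_of_mem hβ] at hmem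
      simpa [Module.preReflection_apply] using hmem
  ext γ
  simp [refl_apply_of_mem hwβ, refl_apply_of_mem hβ, hpairing]

theorem list_prod_mem_WsubJ {l : List (V ≃ₗ[ℝ] V)} (hl : ∀ x ∈ l, x ∈ refls R K) :
    l.prod ∈ WsubJ R K :=
  list_prod_mem fun x hx => Subgroup.subset_closure (hl x hx)

theorem mem_WsubJ_of_len_pos {Δ : Set V} (h : 0 < len R Δ w) : w ∈ WsubJ R Δ :=
  mem_WsubJ_iff_mem_submonoidClosure.2 (mem_closure_of_lengthWrt_pos h)

theorem refl_mul_refl_mul (α : V) (w : V ≃ₗ[ℝ] V) : R.refl α * (R.refl α * w) = w := by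
  rw [← mul_assoc, refl_mul_self, one_mul]

def inversionSet (Pos : Set V) (w : V ≃ₗ[ℝ] V) : Set V :=
  {β | β ∈ Pos ∧ w β ∉ Pos}

theorem apply_sub_mem_span (hK : K ⊆ R.Phi) (hw : w ∈ WsubJ R K) (x : V) :
    w x - x ∈ span ℝ K := by
  have hrefl : ∀ s ∈ refls R K, ∀ x, s x - x ∈ span ℝ K := by
    rintro _ ⟨γ, hγ, rfl⟩ x
    simpa [refl_apply_of_mem (hK hγ)] using smul_mem _ (-R.pairing γ x) (subset_span hγ)
  induction hw using Subgroup.closure_induction'' generalizing x with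
  | mem s hs => exact hrefl s hs x
  | inv_mem s hs =>
    obtain ⟨γ, hγ, rfl⟩ := hs
    exact refl_inv (R := R) γ ▸ hrefl _ ⟨γ, hγ, rfl⟩ x
  | one => simp
  | mul v w _ _ hv hw => simpa using add_mem (hv (w x)) (hw x)

namespace IsBase

variable {Pos Δ J : Set V}

theorem linearIndepOn (hB : IsBase R Pos Δ) : LinearIndepOn ℝ id Δ :=
  hB.indep

theorem simple_subset_phi (hB : IsBase R Pos Δ) : Δ ⊆ R.Phi :=
  hB.delta_sub.trans hB.pos_sub

theorem neg_mem_pos (hB : IsBase R Pos Δ) (hβ : β ∈ R.Phi) (h : β ∉ Pos) : -β ∈ Pos :=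
  (hB.mem_or_neg β hβ).resolve_left h

theorem notMem_pos_of_neg_mem (hB : IsBase R Pos Δ) (h : -β ∈ Pos) : β ∉ Pos :=
  fun h' => hB.not_both β ⟨h', h⟩

theorem pos_subset_closure (hB : IsBase R Pos Δ) : Pos ⊆ AddSubmonoid.closure Δ := by
  intro β hβ
  obtain ⟨c, hc, rfl⟩ := hB.decomp β hβ
  refine sum_mem fun a ha => ?_
  simp only [Nat.cast_smul_eq_nsmul]
  exact nsmul_mem (AddSubmonoid.subset_closure (hc ha)) _

theorem refl_mem_pos (hB : IsBase R Pos Δ) (hα : α ∈ Δ) (hβ : β ∈ Pos) (hne : β ≠ α) :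
    R.refl α β ∈ Pos := by
  have hαΦ := hB.simple_subset_phi hα
  by_contra h
  have hneg := hB.neg_mem_pos (refl_apply_mem hαΦ (hB.pos_sub hβ)) h
  have hspan : β ∈ span ℝ {α} :=
    hB.linearIndepOn.mem_span_of_add_mem_span (singleton_subset_iff.2 hα)
      (hB.pos_subset_closure hβ) (hB.pos_subset_closure hneg)
      (by simpa [refl_apply_of_mem hαΦ] using
        smul_mem _ (R.pairing α β) (mem_span_singleton_self α))
  obtain ⟨t, rfl⟩ := mem_span_singleton.1 hspan
  rcases R.reduced α hαΦ t (hB.pos_sub hβ) with rfl | rfl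
  · exact hne (one_smul _ _)
  · exact hB.not_both α ⟨hB.delta_sub hα, by simpa using hβ⟩

theorem neg_apply_mem_pos (hB : IsBase R Pos Δ) (hw : MapsTo w R.Phi R.Phi)
    (h : ∀ α ∈ Δ, w α ∉ Pos) (hβ : β ∈ Pos) : -w β ∈ Pos := by
  have hcl : -w β ∈ AddSubmonoid.closure Δ := by
    have : AddSubmonoid.closure Δ ≤
        (AddSubmonoid.closure Δ).comap (-w.toLinearMap.toAddMonoidHom) :=
      AddSubmonoid.closure_le.2 fun α hα =>
        hB.pos_subset_closure (hB.neg_mem_pos (hw (hB.simple_subset_phi hα)) (h α hα))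
    exact this (hB.pos_subset_closure hβ)
  refine hB.neg_mem_pos (hw (hB.pos_sub hβ)) fun hpos => ?_
  exact ne_zero_of_mem (hw (hB.pos_sub hβ))
    (hB.linearIndepOn.eq_zero_of_mem_closure_of_neg_mem (hB.pos_subset_closure hpos) hcl)

theorem exists_shorter_list_prod_eq_refl_mul (hB : IsBase R Pos Δ) (hα : α ∈ Δ)
    {l : List (V ≃ₗ[ℝ] V)} (hl : ∀ x ∈ l, x ∈ refls R Δ) (h : l.prod⁻¹ α ∉ Pos) :
    ∃ l' : List (V ≃ₗ[ℝ] V), (∀ x ∈ l', x ∈ refls R Δ) ∧ l'.length + 1 = l.length ∧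
      l'.prod = R.refl α * l.prod := by
  induction l using List.reverseRecOn with
  | nil => exact absurd (hB.delta_sub hα) (by simpa using h)
  | append_singleton t s ih =>
    have ht : ∀ x ∈ t, x ∈ refls R Δ := fun x hx => hl x (by simp [hx])
    obtain ⟨γ, hγ, rfl⟩ := hl s (by simp)
    rw [List.prod_append, List.prod_singleton, mul_inv_rev, refl_inv,
      LinearEquiv.mul_apply] at h
    by_cases hpos : t.prod⁻¹ α ∈ Pos
    -- `s_γ` makes the positive root `t⁻¹α` negative, so `t⁻¹α = γ` and `s_γ = t⁻¹ s_α t`.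
    · have hγeq : t.prod⁻¹ α = γ := by
        by_contra hne
        exact h (hB.refl_mem_pos hγ hpos hne)
      have htW : t.prod⁻¹ ∈ weylGroup R :=
        inv_mem (WsubJ_le_weylGroup hB.simple_subset_phi (list_prod_mem_WsubJ ht))
      refine ⟨t, ht, by simp, ?_⟩
      rw [List.prod_append, List.prod_singleton, ← hγeq,
        refl_apply_eq_conj htW (hB.simple_subset_phi hα)]
      simp [mul_assoc, refl_mul_refl_mul]
    · obtain ⟨t', ht', hlen, hprod⟩ := ih ht hpos
      refine ⟨t' ++ [R.refl γ], fun x hx => ?_, by simp [← hlen], ?_⟩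
      · rcases List.mem_append.1 hx with hx | hx
        exacts [ht' x hx, List.mem_singleton.1 hx ▸ ⟨γ, hγ, rfl⟩]
      · simp [hprod, mul_assoc]

theorem len_refl_mul_lt (hB : IsBase R Pos Δ) (hα : α ∈ Δ) (hw : w ∈ WsubJ R Δ)
    (h : w⁻¹ α ∉ Pos) : len R Δ (R.refl α * w) < len R Δ w := by
  obtain ⟨l, hl, rfl, hlen⟩ :=
    exists_list_length_eq_lengthWrt (mem_WsubJ_iff_mem_submonoidClosure.1 hw)
  obtain ⟨l', hl', hlen', hprod⟩ := hB.exists_shorter_list_prod_eq_refl_mul hα hl h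
  have := lengthWrt_prod_le hl'
  rw [hprod] at this
  change lengthWrt _ _ < lengthWrt _ _
  omega

theorem len_lt_len_refl_mul_iff (hB : IsBase R Pos Δ) (hα : α ∈ Δ) (hw : w ∈ WsubJ R Δ) :
    len R Δ w < len R Δ (R.refl α * w) ↔ w⁻¹ α ∈ Pos := by
  refine ⟨fun hlt => not_not.1 fun h => lt_asymm hlt (hB.len_refl_mul_lt hα hw h), fun h => ?_⟩
  have hsα : R.refl α ∈ WsubJ R Δ := Subgroup.subset_closure ⟨α, hα, rfl⟩
  simpa [refl_mul_refl_mul] using hB.len_refl_mul_lt hα (mul_mem hsα hw)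
    (by simpa [refl_inv, refl_apply_self (hB.simple_subset_phi hα)] using
      hB.notMem_pos_of_neg_mem (by simpa using h))

theorem inversionSet_subset_refl_mul (hB : IsBase R Pos Δ) (hα : α ∈ Δ)
    (hw : MapsTo w R.Phi R.Phi) (h : w⁻¹ α ∈ Pos) :
    inversionSet Pos w ⊆ inversionSet Pos (R.refl α * w) := by
  rintro β ⟨hβ, hwβ⟩
  have hneg := hB.neg_mem_pos (hw (hB.pos_sub hβ)) hwβ
  have hne : -w β ≠ α := by
    rintro heq
    refine hB.not_both β ⟨hβ, ?_⟩
    have : w⁻¹ α = -β := by rw [← heq]; simp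
    rwa [this] at h
  refine ⟨hβ, hB.notMem_pos_of_neg_mem ?_⟩
  simpa using hB.refl_mem_pos hα hneg hne

theorem inv_apply_mem_inversionSet_refl_mul (hB : IsBase R Pos Δ) (hα : α ∈ Δ)
    (h : w⁻¹ α ∈ Pos) : w⁻¹ α ∈ inversionSet Pos (R.refl α * w) :=
  ⟨h, by simpa [refl_apply_self (hB.simple_subset_phi hα)] using
    hB.notMem_pos_of_neg_mem (by simpa using hB.delta_sub hα)⟩

theorem inversionSet_subset_span (hB : IsBase R Pos Δ) (hJ : J ⊆ Δ) (hw : w ∈ WsubJ R J) :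
    inversionSet Pos w ⊆ span ℝ J := by
  rintro β ⟨hβ, hwβ⟩
  have hJΦ := hJ.trans hB.simple_subset_phi
  have hneg := hB.neg_mem_pos
    (mapsTo_phi_of_mem_weylGroup (WsubJ_le_weylGroup hJΦ hw) (hB.pos_sub hβ)) hwβ
  refine hB.linearIndepOn.mem_span_of_add_mem_span hJ (hB.pos_subset_closure hβ)
    (hB.pos_subset_closure hneg) ?_
  simpa [← sub_eq_add_neg] using neg_mem (apply_sub_mem_span hJΦ hw β)

/-- Strip a simple reflection `s_α` off the left of a reduced word `w = s_α v`: then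
`N(v) ⊆ N(w)`, so `v ∈ W_J` by induction, and `v⁻¹α ∈ N(w) ⊆ span J` forces `α ∈ span J`. -/
theorem mem_WsubJ_of_inversionSet_subset_span (hB : IsBase R Pos Δ) (hJ : J ⊆ Δ)
    (hw : w ∈ WsubJ R Δ) (h : inversionSet Pos w ⊆ span ℝ J) : w ∈ WsubJ R J := by
  induction hn : len R Δ w using Nat.strong_induction_on generalizing w with
  | _ n ih =>
  obtain ⟨l, hl, rfl, hlen⟩ :=
    exists_list_length_eq_lengthWrt (mem_WsubJ_iff_mem_submonoidClosure.1 hw)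
  rcases l with _ | ⟨s, t⟩
  · exact one_mem _
  obtain ⟨α, hα, rfl⟩ := hl s (by simp)
  have ht : ∀ x ∈ t, x ∈ refls R Δ := fun x hx => hl x (by simp [hx])
  have htW : t.prod ∈ WsubJ R Δ := list_prod_mem_WsubJ ht
  rw [List.prod_cons] at h hn hlen ⊢
  have hlt : len R Δ t.prod < len R Δ (R.refl α * t.prod) := by
    have := lengthWrt_prod_le ht
    simp only [List.length_cons] at hlen
    change lengthWrt _ _ < lengthWrt _ _
    omega
  have hpos := (hB.len_lt_len_refl_mul_iff hα htW).1 hlt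
  have htJ : t.prod ∈ WsubJ R J := ih _ (hn ▸ hlt) htW ((hB.inversionSet_subset_refl_mul hα
    (mapsTo_phi_of_mem_weylGroup (WsubJ_le_weylGroup hB.simple_subset_phi htW)) hpos).trans h) rfl
  have hαspan : α ∈ span ℝ J := by
    simpa using add_mem (h (hB.inv_apply_mem_inversionSet_refl_mul hα hpos))
      (apply_sub_mem_span (hJ.trans hB.simple_subset_phi) htJ (t.prod⁻¹ α))
  have hαJ : α ∈ J := (hB.linearIndepOn.mono hJ).mem_span_iff_id.1 hαspan
    (hB.linearIndepOn.mono (insert_subset hα hJ))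
  exact mul_mem (Subgroup.subset_closure ⟨α, hαJ, rfl⟩) htJ

theorem inversionSet_subset_of_weakLeftStep (hB : IsBase R Pos Δ) (hw : w ∈ WsubJ R Δ)
    (h : WeakLeftStep (refls R Δ) (len R Δ) w w') :
    w' ∈ WsubJ R Δ ∧ inversionSet Pos w ⊆ inversionSet Pos w' := by
  obtain ⟨_, ⟨α, hα, rfl⟩, rfl, hlt⟩ := h
  exact ⟨mul_mem (Subgroup.subset_closure ⟨α, hα, rfl⟩) hw,
    hB.inversionSet_subset_refl_mul hα
      (mapsTo_phi_of_mem_weylGroup (WsubJ_le_weylGroup hB.simple_subset_phi hw))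
      ((hB.len_lt_len_refl_mul_iff hα hw).1 hlt)⟩

theorem inversionSet_subset_of_transGen (hB : IsBase R Pos Δ) (hw : w ∈ WsubJ R Δ)
    (h : Relation.TransGen (WeakLeftStep (refls R Δ) (len R Δ)) w w') :
    w' ∈ WsubJ R Δ ∧ inversionSet Pos w ⊆ inversionSet Pos w' := by
  induction h with
  | single hstep => exact hB.inversionSet_subset_of_weakLeftStep hw hstep
  | tail _ hstep ih =>
    obtain ⟨hmem, hsub⟩ := hB.inversionSet_subset_of_weakLeftStep ih.1 hstep
    exact ⟨hmem, ih.2.trans hsub⟩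

theorem inv_apply_notMem_pos_of_isLongestIn (hB : IsBase R Pos Δ) {wD : V ≃ₗ[ℝ] V}
    (hwD : IsLongestIn R Δ (weylGroup R) wD) (hmem : wD ∈ WsubJ R Δ) (hα : α ∈ Δ) :
    wD⁻¹ α ∉ Pos := fun h =>
  (hwD.2 _ (WsubJ_le_weylGroup hB.simple_subset_phi
    (mul_mem (Subgroup.subset_closure ⟨α, hα, rfl⟩) hmem))).not_gt
    ((hB.len_lt_len_refl_mul_iff hα hmem).2 h)

/-- `N(x wD) = -wD⁻¹ (Φ⁺ \ N(x))`, so inclusions reverse. -/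
theorem inversionSet_subset_of_mul_subset (hB : IsBase R Pos Δ) {wD x y : V ≃ₗ[ℝ] V}
    (hD : ∀ γ ∈ Pos, -wD⁻¹ γ ∈ Pos) (hy : MapsTo y R.Phi R.Phi)
    (h : inversionSet Pos (x * wD) ⊆ inversionSet Pos (y * wD)) :
    inversionSet Pos y ⊆ inversionSet Pos x := by
  rintro γ ⟨hγ, hyγ⟩
  have hnot : -wD⁻¹ γ ∉ inversionSet Pos (y * wD) := fun hmem =>
    hmem.2 (by simpa using hB.neg_mem_pos (hy (hB.pos_sub hγ)) hyγ)
  refine ⟨hγ, fun hxγ => hnot (h ⟨hD γ hγ, ?_⟩)⟩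
  simpa using hB.notMem_pos_of_neg_mem (β := -x γ) (by simpa using hxγ)

end IsBase

theorem statement_5_general {V : Type} [AddCommGroup V] [Module ℝ V]
    (R : RootSystemData V) (Pos Δ : Set V) (hBase : IsBase R Pos Δ)
    (J : Set V) (hJ : J ⊆ Δ)
    (wD : V ≃ₗ[ℝ] V) (hwD : IsLongestIn R Δ (weylGroup R) wD)
    (wJ : V ≃ₗ[ℝ] V) (hwJ : IsLongestIn R Δ (WsubJ R J) wJ)
    (u : V ≃ₗ[ℝ] V)
    (hlt : ltJ (refls R Δ) (len R Δ) id (wJ * wD) (u * wD)) :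
    u ∈ WsubJ R J := by
  have hΔΦ := hBase.simple_subset_phi
  have hchain := transGen_of_ltJ_id hlt
  have hpos : 0 < len R Δ (u * wD) :=
    (Nat.zero_le _).trans_lt (lt_of_transGen_weakLeftStep hchain)
  have huwD : u * wD ∈ WsubJ R Δ := mem_WsubJ_of_len_pos hpos
  have hwDmem : wD ∈ WsubJ R Δ :=
    mem_WsubJ_of_len_pos (hpos.trans_le (hwD.2 _ (WsubJ_le_weylGroup hΔΦ huwD)))
  have humem : u ∈ WsubJ R Δ := by simpa using mul_mem huwD (inv_mem hwDmem)
  have hD : ∀ γ ∈ Pos, -wD⁻¹ γ ∈ Pos := fun γ => hBase.neg_apply_mem_pos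
    (mapsTo_phi_of_mem_weylGroup (WsubJ_le_weylGroup hΔΦ (inv_mem hwDmem)))
    fun α hα => hBase.inv_apply_notMem_pos_of_isLongestIn hwD hwDmem hα
  have hN := (hBase.inversionSet_subset_of_transGen
    (mul_mem (WsubJ_mono hJ hwJ.1) hwDmem) hchain).2
  exact hBase.mem_WsubJ_of_inversionSet_subset_span hJ humem
    ((hBase.inversionSet_subset_of_mul_subset hD
      (mapsTo_phi_of_mem_weylGroup (WsubJ_le_weylGroup hΔΦ humem)) hN).trans
      (hBase.inversionSet_subset_span hJ hwJ.1))

/-- Let `J ⊆ Δ` and `u ∈ W`.  If `w_J w_Δ <_∅ u w_Δ` in the weak left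
order on `W`, then `u ∈ W_J`.  Here `w_Δ` and `w_J` are the longest elements of `W`
and of `W_J` respectively, and `<_∅` is the weak left order (i.e. `<_J` for `J = ∅`,
with trivial projection). -/
theorem statement_5 {V : Type} [AddCommGroup V] [Module ℝ V]
    (R : RootSystemData V) (Pos Δ : Set V) (hBase : IsBase R Pos Δ)
    (J : Set V) (hJ : J ⊆ Δ)
    (wD : V ≃ₗ[ℝ] V) (hwD : IsLongestIn R Δ (weylGroup R) wD)
    (wJ : V ≃ₗ[ℝ] V) (hwJ : IsLongestIn R Δ (WsubJ R J) wJ)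
    (u : V ≃ₗ[ℝ] V) (hu : u ∈ weylGroup R)
    (hlt : ltJ (refls R Δ) (len R Δ) id (wJ * wD) (u * wD)) :
    u ∈ WsubJ R J :=
  statement_5_general R Pos Δ hBase J hJ wD hwD wJ hwJ u hlt

end PaperSp
end

section
/- There exists a sequence w_Δ = w_0, w_1, …, w_r = id in the group W of signed permutations such that for every 1 ≤ i ≤ r, either w_{i−1} <_∅ w_i in the weak left order, or w_i = u₁ w_{i−1}. -/
/-!
STATEMENT 11 (type C_l): In the hyperoctahedral group of signed permutations there is a
sequence from the longest element `w_Δ = [−1, …, −l]` to the identity in which each step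
either goes up in the weak left order or is left multiplication by `u₁ = [−l, …, −1]`.
-/

open Equiv

/-- The set of signed permutations: bijections `w` of `ℤ` with `w(−a) = −w(a)` which fix
every integer of absolute value `> l` (such a bijection automatically preserves
`{−l, …, −1, 1, …, l}`). -/
def SignedPermSet (l : ℕ) : Set (Equiv.Perm ℤ) :=
  {w | (∀ a : ℤ, w (-a) = -w a) ∧ ∀ a : ℤ, (l : ℤ) < |a| → w a = a}

/-- The Coxeter length of a signed permutation:
`ℓ(w) = #{(i,j) : 1 ≤ i < j ≤ l, w(i) > w(j)} − Σ_{1 ≤ j ≤ l, w(j) < 0} w(j)`. -/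
noncomputable def signedLen (l : ℕ) (w : Equiv.Perm ℤ) : ℤ :=
  (((Finset.Icc (1 : ℤ) l ×ˢ Finset.Icc (1 : ℤ) l).filter
      (fun p => p.1 < p.2 ∧ w p.2 < w p.1)).card : ℤ)
    - ∑ j ∈ Finset.Icc (1 : ℤ) l, (if w j < 0 then w j else 0)

/-- The Coxeter generator `s_i` of the group of signed permutations: for `1 ≤ i ≤ l − 1`
it exchanges `l − i` and `l − i + 1` (and `−(l−i)` and `−(l−i+1)`); `s_l` is the sign
change in the first coordinate, exchanging `1` and `−1`. -/
def signedGen (l : ℕ) (i : ℕ) : Equiv.Perm ℤ :=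
  if i = l then Equiv.swap 1 (-1)
  else if 1 ≤ i ∧ i ≤ l - 1 then
    (Equiv.swap ((l : ℤ) - i) ((l : ℤ) - i + 1)) *
      (Equiv.swap (-((l : ℤ) - i)) (-((l : ℤ) - i) - 1))
  else 1

/-- The product `σ_m ⋯ σ_1` of the first `m` generators of a sequence of generators
(with indices `j_1, …, j_m ∈ {1, …, l}`). -/
def signedProd (l : ℕ) (js : ℕ → ℕ) (m : ℕ) : Equiv.Perm ℤ :=
  (((List.range' 1 m).map (fun k => signedGen l (js k))).reverse).prod

/-- The weak left order: `w <_∅ w'` iff `w' = σ_r ⋯ σ_1 w` for generators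
`σ_m = s_{j_m}` with `ℓ(σ_m ⋯ σ_1 w) = ℓ(w) + m` for all `1 ≤ m ≤ r`. -/
def signedWeakLt (l : ℕ) (w w' : Equiv.Perm ℤ) : Prop :=
  ∃ r : ℕ, 1 ≤ r ∧ ∃ js : ℕ → ℕ,
    (∀ m, 1 ≤ m → m ≤ r → 1 ≤ js m ∧ js m ≤ l) ∧
    (∀ m, 1 ≤ m → m ≤ r → signedLen l (signedProd l js m * w) = signedLen l w + m) ∧
    signedProd l js r * w = w'

/-- The longest element `w_Δ = [−1, −2, …, −l]`, i.e. minus the identity on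
`{−l, …, −1, 1, …, l}`. -/
def signedLongest (l : ℕ) : Equiv.Perm ℤ :=
  Function.Involutive.toPerm (fun x => if |x| ≤ (l : ℤ) then -x else x)
    (by
      intro x
      by_cases h : |x| ≤ (l : ℤ)
      · simp only [if_pos h, abs_neg, if_pos h, neg_neg]
      · simp only [if_neg h, if_neg h])

/-- The element `u₁ = [−l, −(l−1), …, −1]` (the nontrivial element of `W_Ω` in type `C_l`). -/
def uC (l : ℕ) : Equiv.Perm ℤ :=
  Function.Involutive.toPerm
    (fun x => if 1 ≤ x ∧ x ≤ (l : ℤ) then x - (l + 1)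
      else if -(l : ℤ) ≤ x ∧ x ≤ -1 then x + (l + 1) else x)
    (by intro x; dsimp only; split_ifs <;> omega)

/-!
Track the window `[x⁻¹ 1, …, x⁻¹ l]` of the inverse. Left multiplication by `s_{l-a}` swaps
its entries at positions `a, a + 1` and goes up in the weak order when it creates a descent
there; `s_l` negates a positive first entry; `u₁ s_l u₁` negates a negative last entry.
Together these rotate a window `-q` with all `q k > 0`, moving its last entry to any position `j`
with `q l > q 1, …, q (j-1)`. Rotations carry `q = [1, …, l]` (the window of `w_Δ`) through the
windows `[1, …, j-1, m, …, j, l, …, m+1]` to `q = [l, …, 1]`, which is the window of `u₁`; one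
more left multiplication by `u₁` reaches the identity.
-/

def signedPermSubgroup (l : ℕ) : Subgroup (Perm ℤ) where
  carrier := SignedPermSet l
  mul_mem' {x y} hx hy :=
    ⟨fun a => by simp [Perm.mul_apply, hy.1 a, hx.1 (y a)],
      fun a ha => by simp [Perm.mul_apply, hy.2 a ha, hx.2 a ha]⟩
  one_mem' := ⟨fun _ => rfl, fun _ _ => rfl⟩
  inv_mem' {x} hx :=
    ⟨fun a => by rw [Perm.inv_eq_iff_eq, hx.1]; simp,
      fun a ha => by rw [Perm.inv_eq_iff_eq, hx.2 a ha]⟩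

lemma signedPerm_ext {l : ℕ} {x y : Perm ℤ} (hx : x ∈ signedPermSubgroup l)
    (hy : y ∈ signedPermSubgroup l) (h : ∀ k : ℤ, 1 ≤ k → k ≤ l → x k = y k) : x = y := by
  ext k
  rcases lt_trichotomy k 0 with hk | rfl | hk
  · by_cases hkl : -k ≤ l
    · rw [← neg_neg k, hx.1, hy.1, h (-k) (by omega) hkl]
    · rw [hx.2 k (by rw [lt_abs]; omega), hy.2 k (by rw [lt_abs]; omega)]
  · have h0x := hx.1 0
    have h0y := hy.1 0
    simp only [neg_zero] at h0x h0y
    omega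
  · by_cases hkl : k ≤ l
    · exact h k hk hkl
    · rw [hx.2 k (by rw [lt_abs]; omega), hy.2 k (by rw [lt_abs]; omega)]

lemma signedGen_self_apply (l : ℕ) (k : ℤ) :
    signedGen l l k = if k = 1 then -1 else if k = -1 then 1 else k := by
  simp [signedGen, swap_apply_def]

lemma signedGen_sub_apply {l a : ℕ} (ha : 1 ≤ a) (hal : a < l) (k : ℤ) :
    signedGen l (l - a) k = if k = a then (a : ℤ) + 1 else if k = (a : ℤ) + 1 then (a : ℤ)
      else if k = -(a : ℤ) then -(a : ℤ) - 1 else if k = -(a : ℤ) - 1 then -(a : ℤ) else k := by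
  have hcast : ((l - a : ℕ) : ℤ) = l - a := by omega
  rw [signedGen, if_neg (by omega), if_pos (by omega), hcast, Perm.mul_apply,
    swap_apply_def, swap_apply_def]
  split_ifs <;> omega

lemma signedGen_eq_one {l i : ℕ} (hil : i ≠ l) (hi : ¬(1 ≤ i ∧ i < l)) : signedGen l i = 1 := by
  rw [signedGen, if_neg hil, if_neg (by omega)]

lemma signedGen_mem {l i : ℕ} (hi : 1 ≤ i) : signedGen l i ∈ signedPermSubgroup l := by
  by_cases hil : i = l
  · subst hil
    refine ⟨fun a => ?_, fun a ha => ?_⟩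
    · simp only [signedGen_self_apply]; grind
    · rw [lt_abs] at ha; rw [signedGen_self_apply]; split_ifs <;> omega
  by_cases hmid : 1 ≤ i ∧ i < l
  · obtain ⟨a, ha, hal, rfl⟩ : ∃ a, 1 ≤ a ∧ a < l ∧ i = l - a :=
      ⟨l - i, by omega, by omega, by omega⟩
    refine ⟨fun b => ?_, fun b hb => ?_⟩
    · simp only [signedGen_sub_apply ha hal]; split_ifs <;> omega
    · rw [lt_abs] at hb; rw [signedGen_sub_apply ha hal]; split_ifs <;> omega
  · rw [signedGen_eq_one hil hmid]
    exact one_mem _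

lemma signedGen_mul_self (l i : ℕ) : signedGen l i * signedGen l i = 1 := by
  ext k
  simp only [Perm.mul_apply, Perm.one_apply]
  by_cases hil : i = l
  · subst hil; simp only [signedGen_self_apply]; grind
  by_cases hmid : 1 ≤ i ∧ i < l
  · obtain ⟨a, ha, hal, rfl⟩ : ∃ a, 1 ≤ a ∧ a < l ∧ i = l - a :=
      ⟨l - i, by omega, by omega, by omega⟩
    simp only [signedGen_sub_apply ha hal]; split_ifs <;> omega
  · simp [signedGen_eq_one hil hmid]

lemma uC_apply (l : ℕ) (k : ℤ) : uC l k = if 1 ≤ k ∧ k ≤ (l : ℤ) then k - (l + 1)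
    else if -(l : ℤ) ≤ k ∧ k ≤ -1 then k + (l + 1) else k := rfl

lemma uC_mem (l : ℕ) : uC l ∈ signedPermSubgroup l := by
  refine ⟨fun a => ?_, fun a ha => ?_⟩
  · simp only [uC_apply]; split_ifs <;> omega
  · rw [lt_abs] at ha; simp only [uC_apply]; split_ifs <;> omega

lemma uC_mul_self (l : ℕ) : uC l * uC l = 1 := by
  ext k
  simp only [Perm.mul_apply, uC_apply, Perm.one_apply]
  split_ifs <;> omega

lemma signedLongest_apply (l : ℕ) (k : ℤ) :
    signedLongest l k = if |k| ≤ (l : ℤ) then -k else k := rfl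

lemma signedLongest_mem (l : ℕ) : signedLongest l ∈ signedPermSubgroup l := by
  refine ⟨fun a => ?_, fun a ha => ?_⟩
  · simp only [signedLongest_apply, abs_neg]; split_ifs <;> rfl
  · rw [signedLongest_apply, if_neg (by omega)]

lemma signedLongest_inv_apply {l : ℕ} {k : ℤ} (hk : 1 ≤ k) (hkl : k ≤ l) :
    (signedLongest l)⁻¹ k = -k := by
  rw [Perm.inv_eq_iff_eq, signedLongest_apply, abs_neg, if_pos (by rw [abs_le]; omega), neg_neg]

lemma inv_mul_apply_of_mul_self {g x : Perm ℤ} (hg : g * g = 1) (k : ℤ) :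
    (g * x)⁻¹ k = x⁻¹ (g k) := by
  rw [mul_inv_rev, inv_eq_of_mul_eq_one_right hg, Perm.mul_apply]

section length

variable {l : ℕ} {x x' : Perm ℤ}

lemma signedLen_eq_add_one_of_same_inversions {p : ℤ} (hp : 1 ≤ p) (hpl : p ≤ l)
    (hinv : ∀ i j : ℤ, 1 ≤ i → i < j → j ≤ l → (x' j < x' i ↔ x j < x i))
    (hneg : ∀ j : ℤ, 1 ≤ j → j ≤ l →
      (if x' j < 0 then x' j else 0) = (if x j < 0 then x j else 0) - if j = p then 1 else 0) :
    signedLen l x' = signedLen l x + 1 := by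
  have hcard : (Finset.Icc (1 : ℤ) l ×ˢ Finset.Icc (1 : ℤ) l).filter
      (fun ij => ij.1 < ij.2 ∧ x' ij.2 < x' ij.1) =
      (Finset.Icc (1 : ℤ) l ×ˢ Finset.Icc (1 : ℤ) l).filter
      (fun ij => ij.1 < ij.2 ∧ x ij.2 < x ij.1) := by
    refine Finset.filter_congr fun ⟨i, j⟩ hij => ?_
    simp only [Finset.mem_product, Finset.mem_Icc] at hij
    exact and_congr_right fun hlt => hinv i j hij.1.1 hlt hij.2.2
  have hsum : ∑ j ∈ Finset.Icc (1 : ℤ) l, (if x' j < 0 then x' j else 0) =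
      ∑ j ∈ Finset.Icc (1 : ℤ) l, (if x j < 0 then x j else 0) - 1 := by
    rw [Finset.sum_congr rfl fun j hj => hneg j (Finset.mem_Icc.1 hj).1 (Finset.mem_Icc.1 hj).2,
      Finset.sum_sub_distrib, Finset.sum_ite_eq', if_pos (Finset.mem_Icc.2 ⟨hp, hpl⟩)]
  rw [signedLen, signedLen, hcard, hsum]
  ring

lemma signedLen_eq_add_one_of_new_inversion {p q : ℤ} (hp : 1 ≤ p) (hpq : p < q) (hql : q ≤ l)
    (hinv : ∀ i j : ℤ, 1 ≤ i → i < j → j ≤ l → (i, j) ≠ (p, q) → (x' j < x' i ↔ x j < x i))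
    (hold : x p < x q) (hnew : x' q < x' p)
    (hneg : ∑ j ∈ Finset.Icc (1 : ℤ) l, (if x' j < 0 then x' j else 0) =
      ∑ j ∈ Finset.Icc (1 : ℤ) l, (if x j < 0 then x j else 0)) :
    signedLen l x' = signedLen l x + 1 := by
  have hcard : (Finset.Icc (1 : ℤ) l ×ˢ Finset.Icc (1 : ℤ) l).filter
      (fun ij => ij.1 < ij.2 ∧ x' ij.2 < x' ij.1) = insert (p, q)
      ((Finset.Icc (1 : ℤ) l ×ˢ Finset.Icc (1 : ℤ) l).filter
      (fun ij => ij.1 < ij.2 ∧ x ij.2 < x ij.1)) := by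
    ext ⟨i, j⟩
    simp only [Finset.mem_insert, Finset.mem_filter, Finset.mem_product, Finset.mem_Icc,
      Prod.mk.injEq]
    by_cases hij : i = p ∧ j = q
    · obtain ⟨rfl, rfl⟩ := hij
      simp only [and_self, true_or, iff_true]
      exact ⟨⟨⟨hp, by omega⟩, ⟨by omega, hql⟩⟩, hpq, hnew⟩
    · simp only [hij, false_or]
      refine and_congr_right fun hbounds => and_congr_right fun hlt => ?_
      exact hinv i j hbounds.1.1 hlt hbounds.2.2 fun h => hij (Prod.mk.inj h)
  have hnotmem : (p, q) ∉ (Finset.Icc (1 : ℤ) l ×ˢ Finset.Icc (1 : ℤ) l).filter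
      (fun ij => ij.1 < ij.2 ∧ x ij.2 < x ij.1) := by
    simp only [Finset.mem_filter, not_and, not_lt]
    exact fun _ _ => hold.le
  rw [signedLen, signedLen, hcard, Finset.card_insert_of_notMem hnotmem, hneg]
  push_cast
  ring

lemma abs_inv_apply_le (hx : x ∈ signedPermSubgroup l) {v : ℤ} (hv : |v| ≤ l) :
    |x⁻¹ v| ≤ l := by
  by_contra h
  have hfix := hx.2 _ (not_le.1 h)
  rw [← Perm.mul_apply, mul_inv_cancel, Perm.one_apply] at hfix
  rw [← hfix] at h
  exact h hv

lemma apply_eq_zero_iff_of_mem (hx : x ∈ signedPermSubgroup l) {j : ℤ} : x j = 0 ↔ j = 0 := by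
  have h0 : x 0 = 0 := by have := hx.1 0; rw [neg_zero] at this; omega
  exact x.injective.eq_iff' h0

lemma apply_eq_iff_of_mem (hx : x ∈ signedPermSubgroup l) (j v : ℤ) :
    (x j = v ↔ j = x⁻¹ v) ∧ (x j = -v ↔ j = -x⁻¹ v) :=
  ⟨Perm.eq_inv_iff_eq.symm, by rw [← (inv_mem hx).1, ← Perm.eq_inv_iff_eq, eq_comm]⟩

lemma sum_eq_of_eq_add_ite_sub_ite {s : Finset ℤ} {f g : ℤ → ℤ} {p q : ℤ} (hp : p ∈ s)
    (hq : q ∈ s) (h : ∀ j ∈ s, g j = f j + (if j = p then 1 else 0) - if j = q then 1 else 0) :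
    ∑ j ∈ s, g j = ∑ j ∈ s, f j := by
  rw [Finset.sum_congr rfl h, Finset.sum_sub_distrib, Finset.sum_add_distrib, Finset.sum_ite_eq',
    Finset.sum_ite_eq', if_pos hp, if_pos hq, add_sub_cancel_right]

lemma signedLen_signedGen_self_mul (hl : 1 ≤ l) (hx : x ∈ signedPermSubgroup l)
    (h : 0 < x⁻¹ 1) : signedLen l (signedGen l l * x) = signedLen l x + 1 := by
  have hpl : |x⁻¹ 1| ≤ l := abs_inv_apply_le hx (by simpa using hl)
  rw [abs_le] at hpl
  apply signedLen_eq_add_one_of_same_inversions h hpl.2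
  · intro i j hi hij hjl
    have hne : x i ≠ x j := x.injective.ne (by omega)
    have := apply_eq_iff_of_mem hx i 1
    have := apply_eq_iff_of_mem hx j 1
    have := apply_eq_zero_iff_of_mem hx (j := i)
    have := apply_eq_zero_iff_of_mem hx (j := j)
    simp only [Perm.mul_apply, signedGen_self_apply]
    split_ifs <;> omega
  · intro j hj hjl
    have := apply_eq_iff_of_mem hx j 1
    have := apply_eq_zero_iff_of_mem hx (j := j)
    simp only [Perm.mul_apply, signedGen_self_apply]
    split_ifs <;> omega

lemma signedGen_sub_mul_lt_iff {a : ℕ} (ha : 1 ≤ a) (hal : a < l)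
    (hx : x ∈ signedPermSubgroup l) (h : x⁻¹ a < x⁻¹ (a + 1)) {i j : ℤ} (hij : i < j)
    (hpq : ¬(i = x⁻¹ a ∧ j = x⁻¹ (a + 1))) (hqp : ¬(i = -x⁻¹ (a + 1) ∧ j = -x⁻¹ a)) :
    (signedGen l (l - a) * x) j < (signedGen l (l - a) * x) i ↔ x j < x i := by
  have hne : x i ≠ x j := x.injective.ne (by omega)
  have := apply_eq_iff_of_mem hx i a
  have := apply_eq_iff_of_mem hx i (a + 1)
  have := apply_eq_iff_of_mem hx j a
  have := apply_eq_iff_of_mem hx j (a + 1)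
  simp only [Perm.mul_apply, signedGen_sub_apply ha hal]
  split_ifs <;> omega

lemma signedGen_sub_mul_negPart {a : ℕ} (ha : 1 ≤ a) (hal : a < l)
    (hx : x ∈ signedPermSubgroup l) (j : ℤ) :
    (if (signedGen l (l - a) * x) j < 0 then (signedGen l (l - a) * x) j else 0) =
      (if x j < 0 then x j else 0) + (if j = -x⁻¹ (a + 1) then 1 else 0) -
        if j = -x⁻¹ a then 1 else 0 := by
  have := apply_eq_iff_of_mem hx j a
  have := apply_eq_iff_of_mem hx j (a + 1)
  have := apply_eq_zero_iff_of_mem hx (j := j)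
  simp only [Perm.mul_apply, signedGen_sub_apply ha hal]
  split_ifs <;> omega

lemma signedLen_signedGen_sub_mul {a : ℕ} (ha : 1 ≤ a) (hal : a < l)
    (hx : x ∈ signedPermSubgroup l) (h : x⁻¹ a < x⁻¹ (a + 1)) :
    signedLen l (signedGen l (l - a) * x) = signedLen l x + 1 := by
  set p := x⁻¹ a
  set q := x⁻¹ (a + 1)
  have hp : |p| ≤ l := abs_inv_apply_le hx (by rw [abs_le]; omega)
  have hq : |q| ≤ l := abs_inv_apply_le hx (by rw [abs_le]; omega)
  rw [abs_le] at hp hq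
  have hxp := apply_eq_iff_of_mem hx p a
  have hxq := apply_eq_iff_of_mem hx q (a + 1)
  have hp0 : p ≠ 0 := fun h0 => by rw [h0, apply_eq_zero_iff_of_mem hx |>.2 rfl] at hxp; omega
  have hq0 : q ≠ 0 := fun h0 => by rw [h0, apply_eq_zero_iff_of_mem hx |>.2 rfl] at hxq; omega
  have hnegPart := signedGen_sub_mul_negPart ha hal hx
  -- If `p, q < 0` the window holds `-a-1, -a` at positions `-q < -p` and a new inversion
  -- appears there; if `p < 0 < q` only the negative sum changes; if `0 < p, q` the new
  -- inversion is at `p < q`.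
  rcases lt_or_gt_of_ne hp0 with hp0 | hp0
  · rcases lt_or_gt_of_ne hq0 with hq0 | hq0
    · have := apply_eq_iff_of_mem hx (-p) a
      have := apply_eq_iff_of_mem hx (-q) (a + 1)
      refine signedLen_eq_add_one_of_new_inversion (p := -q) (q := -p) (by omega) (by omega)
        (by omega) (fun i j _ hij _ hne => signedGen_sub_mul_lt_iff ha hal hx h hij (by omega)
          fun hh => hne (Prod.ext hh.1 hh.2)) (by omega) ?_ ?_
      · simp only [Perm.mul_apply, signedGen_sub_apply ha hal]
        split_ifs <;> omega
      · exact sum_eq_of_eq_add_ite_sub_ite (Finset.mem_Icc.2 ⟨by omega, by omega⟩)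
          (Finset.mem_Icc.2 ⟨by omega, by omega⟩) fun j _ => hnegPart j
    · refine signedLen_eq_add_one_of_same_inversions (p := -p) (by omega) (by omega)
        (fun i j _ hij _ => signedGen_sub_mul_lt_iff ha hal hx h hij (by omega) (by omega))
        fun j hj _ => ?_
      rw [hnegPart j, if_neg (show ¬j = -q by omega)]
      ring
  · refine signedLen_eq_add_one_of_new_inversion hp0 h hq.2
      (fun i j _ hij _ hne => signedGen_sub_mul_lt_iff ha hal hx h hij
        (fun hh => hne (Prod.ext hh.1 hh.2)) (by omega)) (by omega) ?_ ?_
    · simp only [Perm.mul_apply, signedGen_sub_apply ha hal]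
      split_ifs <;> omega
    · refine Finset.sum_congr rfl fun j hj => ?_
      rw [Finset.mem_Icc] at hj
      rw [hnegPart j, if_neg (show ¬j = -q by omega), if_neg (show ¬j = -p by omega)]
      ring

end length

def SignedStep (l : ℕ) (x y : Perm ℤ) : Prop :=
  y ∈ signedPermSubgroup l ∧ (signedWeakLt l x y ∨ y = uC l * x)

open Relation

section walk

variable {l : ℕ} {x y : Perm ℤ}

lemma mem_of_reflTransGen (hx : x ∈ signedPermSubgroup l)
    (h : ReflTransGen (SignedStep l) x y) : y ∈ signedPermSubgroup l := by
  induction h with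
  | refl => exact hx
  | tail _ hstep _ => exact hstep.1

lemma signedProd_one (l : ℕ) (js : ℕ → ℕ) : signedProd l js 1 = signedGen l (js 1) := by
  simp [signedProd, List.range']

lemma signedWeakLt_signedGen_mul {i : ℕ} (hi : 1 ≤ i) (hil : i ≤ l)
    (h : signedLen l (signedGen l i * x) = signedLen l x + 1) :
    signedWeakLt l x (signedGen l i * x) :=
  ⟨1, le_rfl, fun _ => i, fun _ _ _ => ⟨hi, hil⟩,
    fun m hm hm1 => by obtain rfl : m = 1 := by omega
                       rwa [signedProd_one, Nat.cast_one],
    by rw [signedProd_one]⟩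

lemma reflTransGen_uC_mul (hx : x ∈ signedPermSubgroup l) :
    ReflTransGen (SignedStep l) x (uC l * x) :=
  .single ⟨mul_mem (uC_mem l) hx, .inr rfl⟩

lemma reflTransGen_signedGen_mul (hx : x ∈ signedPermSubgroup l) {i : ℕ} (hi : 1 ≤ i)
    (hil : i ≤ l) (h : signedLen l (signedGen l i * x) = signedLen l x + 1) :
    ReflTransGen (SignedStep l) x (signedGen l i * x) :=
  .single ⟨mul_mem (signedGen_mem hi) hx, .inl (signedWeakLt_signedGen_mul hi hil h)⟩

end walk

lemma exists_seq_of_reflTransGen {α : Type*} {r : α → α → Prop} {a b : α}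
    (h : ReflTransGen r a b) :
    ∃ (n : ℕ) (f : ℕ → α), f 0 = a ∧ f n = b ∧ ∀ i < n, r (f i) (f (i + 1)) := by
  induction h with
  | refl => exact ⟨0, fun _ => a, rfl, rfl, fun i hi => absurd hi (Nat.not_lt_zero i)⟩
  | @tail c d _ hcd ih =>
    obtain ⟨n, f, hf0, hfn, hf⟩ := ih
    refine ⟨n + 1, fun i => if i ≤ n then f i else d, by simpa using hf0, by simp, fun i hi => ?_⟩
    rcases Nat.lt_succ_iff_lt_or_eq.1 hi with hi | rfl
    · simpa [hi.le, Nat.succ_le_of_lt hi] using hf i hi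
    · simpa [hfn] using hcd

def ReachesWindow (l : ℕ) (x : Perm ℤ) (f : ℤ → ℤ) : Prop :=
  ∃ y, ReflTransGen (SignedStep l) x y ∧ ∀ k : ℤ, 1 ≤ k → k ≤ l → y⁻¹ k = f k

namespace ReachesWindow

variable {l : ℕ} {x : Perm ℤ} {f g : ℤ → ℤ}

lemma congr (h : ReachesWindow l x f) (hfg : ∀ k : ℤ, 1 ≤ k → k ≤ l → f k = g k) :
    ReachesWindow l x g :=
  let ⟨y, hxy, hy⟩ := h
  ⟨y, hxy, fun k hk hkl => (hy k hk hkl).trans (hfg k hk hkl)⟩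

lemma trans (hx : x ∈ signedPermSubgroup l) (h : ReachesWindow l x f)
    (H : ∀ y ∈ signedPermSubgroup l, (∀ k : ℤ, 1 ≤ k → k ≤ l → y⁻¹ k = f k) →
      ReachesWindow l y g) :
    ReachesWindow l x g :=
  let ⟨y, hxy, hy⟩ := h
  let ⟨z, hyz, hz⟩ := H y (mem_of_reflTransGen hx hxy) hy
  ⟨z, hxy.trans hyz, hz⟩

end ReachesWindow

lemma uC_signedGen_uC_apply {l : ℕ} {k : ℤ} (hk : 1 ≤ k) (hkl : k ≤ l) :
    uC l (signedGen l l (uC l k)) = if k = l then -(l : ℤ) else k := by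
  simp only [uC_apply, signedGen_self_apply]
  split_ifs <;> omega

section moves

variable {l : ℕ} {x : Perm ℤ}

lemma reachesWindow_swap (hx : x ∈ signedPermSubgroup l) {a : ℕ} (ha : 1 ≤ a) (hal : a < l)
    (h : x⁻¹ a < x⁻¹ (a + 1)) :
    ReachesWindow l x fun k => x⁻¹ (if k = a then a + 1 else if k = a + 1 then a else k) := by
  refine ⟨_, reflTransGen_signedGen_mul (i := l - a) hx (by omega) (by omega)
    (signedLen_signedGen_sub_mul ha hal hx h), fun k hk _ => ?_⟩
  rw [inv_mul_apply_of_mul_self (signedGen_mul_self l _), signedGen_sub_apply ha hal]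
  congr 1
  split_ifs <;> omega

lemma reachesWindow_neg_first (hl : 1 ≤ l) (hx : x ∈ signedPermSubgroup l) (h : 0 < x⁻¹ 1) :
    ReachesWindow l x fun k => if k = 1 then -x⁻¹ 1 else x⁻¹ k := by
  refine ⟨_, reflTransGen_signedGen_mul hx hl le_rfl
    (signedLen_signedGen_self_mul hl hx h), fun k hk _ => ?_⟩
  rw [inv_mul_apply_of_mul_self (signedGen_mul_self l l), signedGen_self_apply]
  dsimp only
  split_ifs <;> first | omega | rfl | exact (inv_mem hx).1 1

lemma reachesWindow_neg_last (hx : x ∈ signedPermSubgroup l) (h : x⁻¹ l < 0) :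
    ReachesWindow l x fun k => if k = l then -x⁻¹ l else x⁻¹ k := by
  have hl : 1 ≤ l := by
    by_contra hl0
    obtain rfl : l = 0 := by omega
    rw [Nat.cast_zero, (apply_eq_zero_iff_of_mem (inv_mem hx)).2 rfl] at h
    exact lt_irrefl 0 h
  have hux := mul_mem (uC_mem l) hx
  have hu : ∀ k, (uC l * x)⁻¹ k = x⁻¹ (uC l k) := inv_mul_apply_of_mul_self (uC_mul_self l)
  have hsux := mul_mem (signedGen_mem hl) hux
  have hlen : signedLen l (signedGen l l * (uC l * x)) = signedLen l (uC l * x) + 1 := by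
    refine signedLen_signedGen_self_mul hl hux ?_
    rw [hu, uC_apply, if_pos (by omega), show (1 : ℤ) - (l + 1) = -l by ring, (inv_mem hx).1]
    omega
  refine ⟨_, (reflTransGen_uC_mul hx).trans
    ((reflTransGen_signedGen_mul hux hl le_rfl hlen).trans (reflTransGen_uC_mul hsux)),
    fun k hk hkl => ?_⟩
  rw [inv_mul_apply_of_mul_self (uC_mul_self l), inv_mul_apply_of_mul_self (signedGen_mul_self l l),
    hu, uC_signedGen_uC_apply hk hkl]
  dsimp only
  split_ifs
  · exact (inv_mem hx).1 l
  · rfl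

end moves

section bubble

variable {l : ℕ}

lemma reachesWindow_bubble_left {x : Perm ℤ} (hx : x ∈ signedPermSubgroup l) {m n : ℕ}
    (hm : 1 ≤ m) (hmn : m ≤ n) (hnl : n ≤ l) (h : ∀ k : ℤ, m ≤ k → k < n → x⁻¹ k < x⁻¹ n) :
    ReachesWindow l x fun k => x⁻¹ (if k < m ∨ n < k then k else if k = m then n else k - 1) := by
  induction n, hmn using Nat.le_induction generalizing x with
  | base => exact ⟨x, .refl, fun k _ _ => by congr 1; split_ifs <;> omega⟩
  | succ n hmn ih =>
    push_cast at h ⊢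
    refine (reachesWindow_swap hx (a := n) (by omega) (by omega) (h n (by omega) (by omega))).trans
      hx fun y hy hyx => ?_
    refine (ih hy (by omega) fun k hk hkn => ?_).congr fun k hk hkl => ?_
    · rw [hyx k (by omega) (by omega), hyx n (by omega) (by omega), if_neg (by omega),
        if_neg (by omega), if_pos rfl]
      exact h k hk (by omega)
    · rw [hyx _ (by split_ifs <;> omega) (by split_ifs <;> omega)]
      congr 1
      split_ifs <;> omega

lemma reachesWindow_bubble_right {x : Perm ℤ} (hx : x ∈ signedPermSubgroup l) {m n : ℕ}
    (hm : 1 ≤ m) (hmn : m ≤ n) (hnl : n ≤ l) (h : ∀ k : ℤ, m < k → k ≤ n → x⁻¹ m < x⁻¹ k) :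
    ReachesWindow l x fun k => x⁻¹ (if k < m ∨ n < k then k else if k = n then m else k + 1) := by
  induction n, hmn using Nat.le_induction generalizing x with
  | base => exact ⟨x, .refl, fun k _ _ => by congr 1; split_ifs <;> omega⟩
  | succ n hmn ih =>
    push_cast at h ⊢
    refine (ih hx (by omega) fun k hk hkn => h k hk (by omega)).trans hx fun y hy hyx => ?_
    have hswap : y⁻¹ n < y⁻¹ (n + 1) := by
      rw [hyx n (by omega) (by omega), hyx (n + 1) (by omega) (by omega), if_neg (by omega),
        if_pos rfl, if_pos (by omega)]
      exact h (n + 1) (by omega) le_rfl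
    refine (reachesWindow_swap hy (a := n) (by omega) (by omega) hswap).congr fun k hk hkl => ?_
    rw [hyx _ (by split_ifs <;> omega) (by split_ifs <;> omega)]
    congr 1
    split_ifs <;> omega

end bubble

lemma reachesWindow_rotate {l : ℕ} {x : Perm ℤ} (hx : x ∈ signedPermSubgroup l) {j : ℕ}
    (hj : 1 ≤ j) (hjl : j ≤ l) (hneg : ∀ k : ℤ, 1 ≤ k → k ≤ l → x⁻¹ k < 0)
    (hlast : ∀ k : ℤ, 1 ≤ k → k < j → x⁻¹ l < x⁻¹ k) :
    ReachesWindow l x fun k => x⁻¹ (if k < j then k else if k = j then l else k - 1) := by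
  have hl : 1 ≤ l := hj.trans hjl
  refine (reachesWindow_neg_last hx (hneg l (by omega) le_rfl)).trans hx fun x₁ hx₁ h₁ => ?_
  refine (reachesWindow_bubble_left hx₁ (m := 1) (n := l) le_rfl hl le_rfl fun k hk hkl => ?_).trans
    hx₁ fun x₂ hx₂ h₂ => ?_
  · rw [h₁ k hk (by omega), h₁ l (by omega) le_rfl, if_neg (by omega), if_pos rfl]
    linarith [hneg k hk (by omega), hneg l (by omega) le_rfl]
  have h₂' : ∀ k : ℤ, 1 ≤ k → k ≤ l → x₂⁻¹ k = if k = 1 then -x⁻¹ l else x⁻¹ (k - 1) := by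
    intro k hk hkl
    rw [h₂ k hk hkl, h₁ _ (by split_ifs <;> omega) (by split_ifs <;> omega)]
    split_ifs <;> first | rfl | omega
  refine (reachesWindow_neg_first hl hx₂ ?_).trans hx₂ fun x₃ hx₃ h₃ => ?_
  · rw [h₂' 1 le_rfl (by omega), if_pos rfl]
    linarith [hneg l (by omega) le_rfl]
  have h₃' : ∀ k : ℤ, 1 ≤ k → k ≤ l → x₃⁻¹ k = if k = 1 then x⁻¹ l else x⁻¹ (k - 1) := by
    intro k hk hkl
    rw [h₃ k hk hkl, h₂' k hk hkl, h₂' 1 le_rfl (by omega)]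
    split_ifs <;> simp_all
  refine (reachesWindow_bubble_right hx₃ (m := 1) (n := j) le_rfl hj hjl fun k hk hkj => ?_).congr
    fun k hk hkl => ?_
  · rw [Nat.cast_one] at hk ⊢
    rw [h₃' 1 le_rfl (by omega), h₃' k (by omega) (by omega), if_pos rfl, if_neg (by omega)]
    exact hlast (k - 1) (by omega) (by omega)
  · rw [h₃' _ (by split_ifs <;> omega) (by split_ifs <;> omega)]
    split_ifs <;> first | (congr 1; omega) | omega

/-- The window `[1, …, j-1, m, m-1, …, j, l, l-1, …, m+1]`. -/
def blockReversal (l j m : ℕ) (k : ℤ) : ℤ :=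
  if k < j then k else if k ≤ m then j + m - k else l + m + 1 - k

section reversal

variable {l j : ℕ} {x : Perm ℤ}

lemma reachesWindow_blockReversal_succ (hx : x ∈ signedPermSubgroup l) {m : ℕ} (hj : 1 ≤ j)
    (hjm : j ≤ m) (hml : m < l) (h : ∀ k : ℤ, 1 ≤ k → k ≤ l → x⁻¹ k = -blockReversal l j m k) :
    ReachesWindow l x fun k => -blockReversal l j (m + 1) k := by
  refine (reachesWindow_rotate hx hj (by omega) (fun k hk hkl => ?_) (fun k hk hkj => ?_)).congr
    fun k hk hkl => ?_
  · rw [h k hk hkl, blockReversal]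
    split_ifs <;> omega
  · rw [h k hk (by omega), h l (by omega) le_rfl, blockReversal, blockReversal]
    split_ifs <;> omega
  · rw [h _ (by split_ifs <;> omega) (by split_ifs <;> omega)]
    simp only [blockReversal]
    push_cast
    split_ifs <;> omega

lemma reachesWindow_blockReversal (hx : x ∈ signedPermSubgroup l) (hj : 1 ≤ j) (hjl : j ≤ l)
    (h : ∀ k : ℤ, 1 ≤ k → k ≤ l → x⁻¹ k = -blockReversal l j j k) :
    ReachesWindow l x fun k => -blockReversal l j l k := by
  suffices ∀ m, j ≤ m → m ≤ l → ReachesWindow l x fun k => -blockReversal l j m k from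
    this l hjl le_rfl
  intro m hjm
  induction m, hjm using Nat.le_induction with
  | base => exact fun _ => ⟨x, .refl, h⟩
  | succ m hjm ih =>
    exact fun hml => (ih (by omega)).trans hx fun y hy hyx =>
      reachesWindow_blockReversal_succ hy hj hjm (by omega) hyx

end reversal

lemma reachesWindow_signedLongest (l : ℕ) {t : ℕ} (ht : t ≤ l) :
    ReachesWindow l (signedLongest l) fun k => -blockReversal l (l + 1 - t) l k := by
  induction t with
  | zero =>
    refine ⟨signedLongest l, .refl, fun k hk hkl => ?_⟩
    simp only [signedLongest_inv_apply hk hkl, blockReversal,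
      if_pos (show k < ↑(l + 1 - 0) by omega)]
  | succ t ih =>
    refine (ih (by omega)).trans (signedLongest_mem l) fun y hy hyw =>
      reachesWindow_blockReversal hy (by omega) (by omega) fun k hk hkl => ?_
    rw [hyw k hk hkl]
    simp only [blockReversal]
    split_ifs <;> omega

lemma reflTransGen_signedLongest_one (l : ℕ) :
    ReflTransGen (SignedStep l) (signedLongest l) 1 := by
  obtain ⟨y, hy, hyw⟩ := reachesWindow_signedLongest l le_rfl
  have hmem := mem_of_reflTransGen (signedLongest_mem l) hy
  have hyu : y⁻¹ = uC l := signedPerm_ext (inv_mem hmem) (uC_mem l) fun k hk hkl => by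
    rw [hyw k hk hkl, uC_apply, if_pos ⟨hk, hkl⟩]
    simp only [blockReversal]
    split_ifs <;> omega
  have hy1 : uC l * y = 1 := by rw [← hyu, inv_mul_cancel]
  exact hy1 ▸ hy.trans (reflTransGen_uC_mul hmem)

theorem statement_11_general (l : ℕ) :
    ∃ (r : ℕ) (w : ℕ → Equiv.Perm ℤ),
      (∀ i, i ≤ r → w i ∈ SignedPermSet l) ∧
      w 0 = signedLongest l ∧ w r = 1 ∧
      ∀ i, 1 ≤ i → i ≤ r →
        signedWeakLt l (w (i - 1)) (w i) ∨ w i = uC l * w (i - 1) := by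
  obtain ⟨r, w, h0, hr, hstep⟩ := exists_seq_of_reflTransGen (reflTransGen_signedLongest_one l)
  refine ⟨r, w, fun i hi => ?_, h0, hr, fun i hi hir => ?_⟩
  · rcases i with _ | i
    · exact h0 ▸ signedLongest_mem l
    · exact (hstep i (by omega)).1
  · obtain ⟨i, rfl⟩ : ∃ i', i = i' + 1 := ⟨i - 1, by omega⟩
    exact (hstep i (by omega)).2

theorem statement_11 (l : ℕ) (hl : 1 ≤ l) :
    ∃ (r : ℕ) (w : ℕ → Equiv.Perm ℤ),
      (∀ i, i ≤ r → w i ∈ SignedPermSet l) ∧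
      w 0 = signedLongest l ∧ w r = 1 ∧
      ∀ i, 1 ≤ i → i ≤ r →
        signedWeakLt l (w (i - 1)) (w i) ∨ w i = uC l * w (i - 1) :=
  statement_11_general l
end
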